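/- arXiv:2304.10549 — 5 statements merged into one kernel-verified Lean document; each statement's English description precedes it below -/
import Mathlib

section
/- For the formal context with objects G = 𝒫 (all partial orders on a finite set X = {x₁,…,x_N}), attributes M = M_≤ ∪ M_≰ where p I "x_i ≤ x_j" iff (x_i,x_j) ∈ p and p I "x_i ≰ x_j" iff (x_i,x_j) ∉ p, the closure operator γ = Φ∘Ψ satisfies: for any finite set {p₁,…,p_k} of partial orders, γ({p₁,…,p_k}) = {p ∈ 𝒫 | ⋂ᵢ pᵢ ⊆ p ⊆ ⋃ᵢ pᵢ}. -/
/-- A partial order on `X`, viewed as a set of pairs. -/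
def IsPosetRel {X : Type} (p : Set (X × X)) : Prop :=
  (∀ y : X, (y, y) ∈ p) ∧
  (∀ y₁ y₂ y₃ : X, (y₁, y₂) ∈ p → (y₂, y₃) ∈ p → (y₁, y₃) ∈ p) ∧
  (∀ y₁ y₂ : X, (y₁, y₂) ∈ p → y₁ ≠ y₂ → (y₂, y₁) ∉ p)

/-- The set `𝒫` of all partial orders on `X`. -/
def Poset (X : Type) := {p : Set (X × X) // IsPosetRel p}

/-- The closure operator `γ(S) = {p ∈ 𝒫 | ⋂S ⊆ p ⊆ ⋃S}`. -/
def gamPO {X : Type} (S : Set (Poset X)) : Set (Poset X) :=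
  {p | (⋂ s ∈ S, s.val) ⊆ p.val ∧ p.val ⊆ ⋃ s ∈ S, s.val}

/-- Condition (C1): `S ⊊ γ(S)`. -/
def C1 {X : Type} (S : Set (Poset X)) : Prop := S ⊂ gamPO S

/-- Condition (C2): no family of proper subsets of `S` has closures unioning to `γ(S)`. -/
def C2 {X : Type} (S : Set (Poset X)) : Prop :=
  ¬ ∃ (ι : Type) (A : ι → Set (Poset X)),
      (∀ i : ι, A i ⊂ S) ∧ (⋃ i : ι, gamPO (A i)) = gamPO S

/-- A union-free generic (ufg) set. -/
def IsUfg {X : Type} (S : Set (Poset X)) : Prop := C1 S ∧ C2 S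

/-- Attributes: `(true, (i,j))` is the attribute "xᵢ ≤ xⱼ", `(false, (i,j))` is "xᵢ ≰ xⱼ",
for `i ≠ j`. -/
def Attr (X : Type) := Bool × {ij : X × X // ij.1 ≠ ij.2}

/-- The incidence relation of the formal context of partial orders. -/
def Inc {X : Type} (p : Poset X) (m : Attr X) : Prop :=
  if m.1 then m.2.val ∈ p.val else m.2.val ∉ p.val

def Phi {G M : Type} (I : G → M → Prop) (B : Set M) : Set G := {g | ∀ m ∈ B, I g m}

def Psi {G M : Type} (I : G → M → Prop) (A : Set G) : Set M := {m | ∀ g ∈ A, I g m}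

def gam {G M : Type} (I : G → M → Prop) (A : Set G) : Set G := Phi I (Psi I A)

theorem gam_eq_interval {X : Type} [Fintype X] (S : Set (Poset X))
    (hfin : S.Finite) (hne : S.Nonempty) :
    gam (Inc (X := X)) S =
      {p : Poset X | (⋂ s ∈ S, s.val) ⊆ p.val ∧ p.val ⊆ ⋃ s ∈ S, s.val} := by
  ext p
  constructor
  · rintro hp
    constructor
    · rintro ⟨i, j⟩ hij
      simp only [Set.mem_iInter] at hij
      by_cases h : i = j
      · subst h; exact p.prop.1 i
      · have : Inc p (true, ⟨(i, j), h⟩) := by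
          apply hp
          intro s hs
          simpa [Inc] using hij s hs
        simpa [Inc] using this
    · rintro ⟨i, j⟩ hij
      by_contra hcon
      simp only [Set.mem_iUnion, not_exists] at hcon
      have hne' : i ≠ j := by
        rintro rfl
        obtain ⟨s, hs⟩ := hne
        exact hcon s hs (s.prop.1 i)
      have : Inc p (false, ⟨(i, j), hne'⟩) := by
        apply hp
        intro s hs
        simpa [Inc] using hcon s hs
      simp [Inc] at this
      exact this hij
  · rintro ⟨h1, h2⟩ ⟨b, ⟨⟨i, j⟩, hij⟩⟩ hm
    cases b
    · simp only [Inc, if_neg (by simp : ¬ (false : Bool) = true)]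
      intro hmem
      have := h2 hmem
      simp only [Set.mem_iUnion] at this
      obtain ⟨s, hs, hmem'⟩ := this
      have := hm s hs
      simp [Inc] at this
      exact this hmem'
    · simp only [Inc, if_pos rfl]
      apply h1
      simp only [Set.mem_iInter]
      intro s hs
      have := hm s hs
      simpa [Inc] using this
end

section
/- Let γ be the closure operator on the set 𝒫 of partial orders on a finite set X given by γ(S) = {p ∈ 𝒫 | ⋂ S ⊆ p ⊆ ⋃ S} for nonempty S. A nonempty finite set S ⊆ 𝒫 satisfies conditions (C1) and (C2) (i.e., is a ufg set) if and only if there exists q ∈ γ(S) \ S such that for all x ∈ S, q ∉ γ(S \ {x}). -/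
lemma subset_gamPO {X : Type} (S : Set (Poset X)) : S ⊆ gamPO S := by
  intro s hs
  exact ⟨Set.biInter_subset_of_mem hs, Set.subset_biUnion_of_mem hs⟩

lemma gamPO_mono {X : Type} {A B : Set (Poset X)} (h : A ⊆ B) : gamPO A ⊆ gamPO B := by
  rintro p ⟨h1, h2⟩
  refine ⟨subset_trans ?_ h1, h2.trans ?_⟩
  · exact Set.biInter_subset_biInter_left h
  · exact Set.biUnion_subset_biUnion_left h

theorem ufg_iff_witness {X : Type} [Fintype X] (S : Set (Poset X))
    (hfin : S.Finite) (hne : S.Nonempty) :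
    (C1 S ∧ C2 S) ↔
      ∃ q, q ∈ gamPO S \ S ∧ ∀ x ∈ S, q ∉ gamPO (S \ {x}) := by
  constructor
  · rintro ⟨hC1, hC2⟩
    by_contra hno
    push_neg at hno
    -- hno : ∀ q ∈ gamPO S \ S, ∃ x ∈ S, q ∈ gamPO (S \ {x})
    obtain ⟨q0, hq0γ, hq0S⟩ := Set.exists_of_ssubset hC1
    -- S has at least two elements
    have htwo : ∀ p ∈ S, ∃ x ∈ S, x ≠ p := by
      intro p hp
      by_contra h
      push_neg at h
      have hSp : S = {p} := Set.eq_singleton_iff_unique_mem.mpr ⟨hp, h⟩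
      apply hq0S
      rw [hSp] at hq0γ
      obtain ⟨h1, h2⟩ := hq0γ
      simp at h1 h2
      have : q0 = p := Subtype.ext (subset_antisymm h2 h1)
      rw [hSp, this]
      exact rfl
    apply hC2
    refine ⟨{x // x ∈ S} ⊕ {q // q ∈ gamPO S \ S},
      fun i => Sum.elim (fun x => S \ {x.val})
        (fun q => S \ {Classical.choose (hno q.val q.prop)}) i, ?_, ?_⟩
    · rintro (x | q)
      · exact ⟨Set.diff_subset, fun h => (h x.prop).2 rfl⟩
      · have hx := Classical.choose_spec (hno q.val q.prop)
        exact ⟨Set.diff_subset, fun h => (h hx.1).2 rfl⟩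
    · ext p
      constructor
      · intro hp
        obtain ⟨i, hi⟩ := Set.mem_iUnion.mp hp
        rcases i with x | q
        · exact gamPO_mono Set.diff_subset hi
        · exact gamPO_mono Set.diff_subset hi
      · intro hp
        by_cases hpS : p ∈ S
        · obtain ⟨x, hxS, hxp⟩ := htwo p hpS
          exact Set.mem_iUnion.mpr ⟨Sum.inl ⟨x, hxS⟩,
            subset_gamPO _ ⟨hpS, fun h => hxp (Set.mem_singleton_iff.mp h).symm⟩⟩
        · exact Set.mem_iUnion.mpr ⟨Sum.inr ⟨p, hp, hpS⟩,
            (Classical.choose_spec (hno p ⟨hp, hpS⟩)).2⟩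
  · rintro ⟨q, ⟨hqγ, hqS⟩, hq⟩
    constructor
    · rw [C1, Set.ssubset_def]
      exact ⟨subset_gamPO S, fun h => hqS (h hqγ)⟩
    · rintro ⟨ι, A, hA, hU⟩
      rw [← hU] at hqγ
      obtain ⟨i, hi⟩ := Set.mem_iUnion.mp hqγ
      obtain ⟨x, hxS, hxA⟩ := Set.exists_of_ssubset (hA i)
      have hsub : A i ⊆ S \ {x} := fun y hy =>
        ⟨(hA i).subset hy, fun he => hxA (Set.mem_singleton_iff.mp he ▸ hy)⟩
      exact hq x hxS (gamPO_mono hsub hi)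
end

section
/- Let γ be any closure operator on a set G. If there exists q ∈ γ(S) \ S such that for all x ∈ S, q ∉ γ(S \ {x}), then S satisfies condition (C2): there is no family (A_i) of proper subsets of S with ⋃_i γ(A_i) = γ(S). -/
theorem witness_implies_C2 {G : Type} (γ : Set G → Set G)
    (hext : ∀ A : Set G, A ⊆ γ A)
    (hiso : ∀ A B : Set G, A ⊆ B → γ A ⊆ γ B)
    (hidem : ∀ A : Set G, γ (γ A) = γ A)
    (S : Set G)
    (h : ∃ q, q ∈ γ S \ S ∧ ∀ x ∈ S, q ∉ γ (S \ {x})) :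
    ¬ ∃ (ι : Type) (A : ι → Set G),
        (∀ i : ι, A i ⊂ S) ∧ (⋃ i : ι, γ (A i)) = γ S := by
  rintro ⟨ι, A, hA, hU⟩
  obtain ⟨q, ⟨hqγ, hqS⟩, hq⟩ := h
  rw [← hU] at hqγ
  obtain ⟨i, hi⟩ := Set.mem_iUnion.mp hqγ
  obtain ⟨hsub, hne⟩ := hA i
  obtain ⟨x, hxS, hxA⟩ := Set.not_subset.mp hne
  exact hq x hxS (hiso _ _ (fun y hy => Set.mem_diff_singleton.mpr ⟨hsub hy, fun h' : y = x => hxA (h' ▸ hy)⟩) hi)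
end

section
/- If Q = {p₁,…,p_k} is a ufg set of partial orders and p is any partial order in γ(Q) = {r | ⋂Q ⊆ r ⊆ ⋃Q} with p ∉ Q, then Q ∪ {p} is not a ufg set. -/
lemma gam_insert_eq {X : Type} (Q : Set (Poset X)) (p : Poset X)
    (hp : p ∈ gamPO Q) : gamPO (Q ∪ {p}) = gamPO Q := by
  obtain ⟨h1, h2⟩ := hp
  have hInt : (⋂ s ∈ (Q ∪ {p}), s.val) = ⋂ s ∈ Q, s.val := by
    apply subset_antisymm
    · exact Set.biInter_mono (Set.subset_union_left) (fun _ _ => le_refl _)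
    · intro x hx
      simp only [Set.mem_iInter] at *
      intro s hs
      rcases hs with hs | hs
      · exact hx s hs
      · rcases hs with rfl
        exact h1 (by simp only [Set.mem_iInter]; exact fun s hs => hx s hs) 
  have hUn : (⋃ s ∈ (Q ∪ {p}), s.val) = ⋃ s ∈ Q, s.val := by
    apply subset_antisymm
    · intro x hx
      simp only [Set.mem_iUnion] at *
      obtain ⟨s, hs, hxs⟩ := hx
      rcases hs with hs | hs
      · exact ⟨s, hs, hxs⟩
      · rcases hs with rfl
        have := h2 hxs
        simpa using this
    · exact Set.biUnion_mono (Set.subset_union_left) (fun _ _ => le_refl _)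
  unfold gamPO
  rw [hInt, hUn]

theorem not_ufg_insert_of_mem_closure {X : Type} [Fintype X]
    (Q : Set (Poset X)) (hfin : Q.Finite) (hQ : IsUfg Q)
    (p : Poset X) (hp : p ∈ gamPO Q) (hpQ : p ∉ Q) :
    ¬ IsUfg (Q ∪ {p}) := by
  rintro ⟨-, hC2⟩
  apply hC2
  refine ⟨Unit, fun _ => Q, fun _ => ⟨Set.subset_union_left, ?_⟩, ?_⟩
  · intro h
    exact hpQ (h (by simp))
  · rw [gam_insert_eq Q p hp]
    exact Set.iUnion_const _
end

section
/- Let γ be a closure operator on G given by a formal context, and S ⊆ G, q ∈ γ(S), x ∈ S. Then q ∉ γ(S \ {x}) if and only if the set of distinguishing attributes 𝒟^q_{x∈S} = {m ∈ M | ¬(q I m), ¬(x I m), and ∀x̂ ∈ S\{x}, x̂ I m} is nonempty. -/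
theorem not_mem_gam_diff_iff_dist {G M : Type} (I : G → M → Prop) (S : Set G)
    (q : G) (hq : q ∈ gam I S) (x : G) (hx : x ∈ S) :
    q ∉ gam I (S \ {x}) ↔
      ∃ m : M, ¬ I q m ∧ ¬ I x m ∧ ∀ y ∈ S \ {x}, I y m := by
  constructor
  · intro h
    simp only [gam, Phi, Psi, Set.mem_setOf_eq, not_forall] at h
    obtain ⟨m, hm, hqm⟩ := h
    refine ⟨m, hqm, ?_, hm⟩
    intro hxm
    exact hqm (hq m (fun g hg => by
      by_cases hgx : g = x
      · exact hgx ▸ hxm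
      · exact hm g ⟨hg, hgx⟩))
  · rintro ⟨m, hqm, _, hm⟩ hmem
    exact hqm (hmem m hm)
end
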